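/- arXiv:1712.04118 — 4 statements merged into one kernel-verified Lean document; each statement's English description precedes it below -/
import Mathlib

section
/- Let A be a real n×p matrix and let H be a real n×p matrix with HᵀH = I_p. Then tr(Hᵀ A) ≤ tr(√(Aᵀ A)), where √(Aᵀ A) denotes the positive semidefinite square root of the positive semidefinite matrix Aᵀ A. (The right-hand side equals the sum of the singular values of A.) -/
open Matrix

open scoped ComplexOrder in
/-- The positive semidefinite square root, as defined in the older Mathlib
(`Matrix.PosSemidef.sqrt`, since removed). -/
noncomputable def Matrix.PosSemidef.sqrt {n : Type*} [Fintype n] [DecidableEq n]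
    {𝕜 : Type*} [RCLike 𝕜] {A : Matrix n n 𝕜} (hA : A.PosSemidef) : Matrix n n 𝕜 :=
  hA.1.eigenvectorUnitary.1 * diagonal ((↑) ∘ Real.sqrt ∘ hA.1.eigenvalues) *
  (star hA.1.eigenvectorUnitary : Matrix n n 𝕜)

/-!
Diagonalise `Aᵀ A` in an orthonormal eigenbasis `(qᵢ)` with eigenvalues `λᵢ`. Computing the trace
in that basis gives `tr(Hᵀ A) = ∑ᵢ ⟨H qᵢ, A qᵢ⟩`. Since `H` is an isometry, `‖H qᵢ‖ = 1`, while
`‖A qᵢ‖² = ⟨qᵢ, Aᵀ A qᵢ⟩ = λᵢ`, so Cauchy–Schwarz bounds each term by `√λᵢ`, and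
`∑ᵢ √λᵢ = tr √(Aᵀ A)`.
-/

open Finset
open scoped ComplexOrder

namespace Matrix

variable {m n 𝕜 : Type*} [Fintype m] [Fintype n] [RCLike 𝕜]

theorem mulVec_dotProduct_mulVec {R : Type*} [CommSemiring R] (B C : Matrix m n R) (v : n → R) :
    (B *ᵥ v) ⬝ᵥ (C *ᵥ v) = v ⬝ᵥ ((Bᵀ * C) *ᵥ v) := by
  rw [← mulVec_mulVec, dotProduct_mulVec v, vecMul_transpose]

theorem dotProduct_le_sqrt_mul_sqrt (v w : n → ℝ) : v ⬝ᵥ w ≤ √(v ⬝ᵥ v) * √(w ⬝ᵥ w) := by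
  simpa only [dotProduct, sq] using Real.sum_mul_le_sqrt_mul_sqrt univ v w

theorem star_dotProduct_orthonormalBasis_self {ι : Type*} [Fintype ι]
    (b : OrthonormalBasis ι 𝕜 (EuclideanSpace 𝕜 n)) (i : ι) : star ⇑(b i) ⬝ᵥ ⇑(b i) = 1 := by
  rw [dotProduct_comm, ← EuclideanSpace.inner_eq_star_dotProduct, b.inner_eq_one]

theorem trace_eq_sum_star_dotProduct_mulVec {ι : Type*} [Fintype ι] [DecidableEq n]
    (M : Matrix n n 𝕜) (b : OrthonormalBasis ι 𝕜 (EuclideanSpace 𝕜 n)) :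
    M.trace = ∑ i, star ⇑(b i) ⬝ᵥ (M *ᵥ ⇑(b i)) := by
  have trace_toLpLin : LinearMap.trace 𝕜 _ (toLpLin 2 2 M) = M.trace := by
    rw [toLpLin_eq_toLin, LinearMap.trace_eq_matrix_trace 𝕜 (PiLp.basisFun 2 𝕜 n),
      LinearMap.toMatrix_toLin]
  rw [← trace_toLpLin, LinearMap.trace_eq_sum_inner _ b]
  simp only [EuclideanSpace.inner_eq_star_dotProduct, toLpLin_apply, dotProduct_comm]

theorem PosSemidef.trace_sqrt [DecidableEq n] {A : Matrix n n 𝕜} (hA : A.PosSemidef) :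
    hA.sqrt.trace = ∑ i, (√(hA.1.eigenvalues i) : 𝕜) := by
  rw [PosSemidef.sqrt, trace_mul_cycle, Unitary.coe_star_mul_self, one_mul, trace_diagonal]
  rfl

end Matrix

/-- For any real `n×p` matrix `A` and any `H` with orthonormal columns (`Hᵀ H = I_p`),
`tr(Hᵀ A) ≤ tr(√(Aᵀ A))`, where `√(Aᵀ A)` is the positive semidefinite square root
of the positive semidefinite matrix `Aᵀ A`. -/
theorem trace_semiorthogonal_le_trace_sqrt {n p : ℕ}
    (A H : Matrix (Fin n) (Fin p) ℝ) (hH : Hᵀ * H = 1)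
    (hS : (Aᵀ * A).PosSemidef) :
    (Hᵀ * A).trace ≤ hS.sqrt.trace := by
  set q := hS.1.eigenvectorBasis
  have hq : ∀ i, ⇑(q i) ⬝ᵥ ⇑(q i) = 1 := by
    simpa only [star_trivial] using star_dotProduct_orthonormalBasis_self q
  have hq_eigen : ∀ i, (Aᵀ * A) *ᵥ ⇑(q i) = hS.1.eigenvalues i • ⇑(q i) :=
    hS.1.mulVec_eigenvectorBasis
  calc (Hᵀ * A).trace = ∑ i, (H *ᵥ q i) ⬝ᵥ (A *ᵥ q i) := by
        simp only [trace_eq_sum_star_dotProduct_mulVec _ q, star_trivial, mulVec_dotProduct_mulVec]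
    _ ≤ ∑ i, √((H *ᵥ q i) ⬝ᵥ (H *ᵥ q i)) * √((A *ᵥ q i) ⬝ᵥ (A *ᵥ q i)) :=
        sum_le_sum fun i _ ↦ dotProduct_le_sqrt_mul_sqrt _ _
    _ = ∑ i, √(hS.1.eigenvalues i) := by
        simp only [mulVec_dotProduct_mulVec, hH, one_mulVec, hq_eigen,
          dotProduct_smul, smul_eq_mul, hq, mul_one, Real.sqrt_one, one_mul]
    _ = hS.sqrt.trace := hS.trace_sqrt.symm
end

section
/- (Reduced Rank Procrustes Rotation, Theorem 1.) Let M be a real N×n matrix and G a real N×p matrix, and suppose Mᵀ G admits a (thin) singular value decomposition Mᵀ G = U D Vᵀ, where U is a real n×p matrix with UᵀU = I_p, V is a real p×p orthogonal matrix, and D is a real p×p diagonal matrix with nonnegative diagonal entries. Then Ĥ = U Vᵀ satisfies ĤᵀĤ = I_p and, for every real n×p matrix H with HᵀH = I_p, ‖M − G Ĥᵀ‖_F² ≤ ‖M − G Hᵀ‖_F². That is, Ĥ = U Vᵀ solves the constrained minimization min_H ‖M − G Hᵀ‖_F² subject to HᵀH = I_{p×p}. -/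
open Matrix

noncomputable def frobNorm {m n : Type*} [Fintype m] [Fintype n] (M : Matrix m n ℝ) : ℝ :=
  Real.sqrt (∑ i, ∑ j, (M i j) ^ 2)

lemma frob_sq_trace {m n : Type*} [Fintype m] [Fintype n] (A : Matrix m n ℝ) :
    frobNorm A ^ 2 = (Aᵀ * A).trace := by
  have h : (0:ℝ) ≤ ∑ i, ∑ j, (A i j)^2 := by positivity
  rw [frobNorm, Real.sq_sqrt h, Matrix.trace]
  simp only [Matrix.diag, Matrix.mul_apply, Matrix.transpose_apply, sq]
  rw [Finset.sum_comm]

lemma expand_obj {N n p : ℕ} (M : Matrix (Fin N) (Fin n) ℝ) (G : Matrix (Fin N) (Fin p) ℝ)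
    (H : Matrix (Fin n) (Fin p) ℝ) (hH : Hᵀ * H = 1) :
    frobNorm (M - G * Hᵀ) ^ 2
      = (Mᵀ * M).trace + (Gᵀ * G).trace - 2 * (Mᵀ * G * Hᵀ).trace := by
  rw [frob_sq_trace]
  have h1 : (M - G * Hᵀ)ᵀ * (M - G * Hᵀ)
      = Mᵀ * M - Mᵀ * (G * Hᵀ) - ((G * Hᵀ)ᵀ * M - (G * Hᵀ)ᵀ * (G * Hᵀ)) := by
    rw [Matrix.transpose_sub, Matrix.sub_mul, Matrix.mul_sub, Matrix.mul_sub]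
  rw [h1]
  have h2 : ((G * Hᵀ)ᵀ * (G * Hᵀ)).trace = (Gᵀ * G).trace := by
    have e : (G * Hᵀ)ᵀ * (G * Hᵀ) = H * (Gᵀ * G * Hᵀ) := by
      simp [Matrix.transpose_mul, Matrix.mul_assoc]
    rw [e, Matrix.trace_mul_comm, Matrix.mul_assoc, hH, Matrix.mul_one]
  have h3 : ((G * Hᵀ)ᵀ * M).trace = (Mᵀ * (G * Hᵀ)).trace := by
    rw [← Matrix.trace_transpose ((G * Hᵀ)ᵀ * M)]
    simp [Matrix.transpose_mul]
  rw [Matrix.trace_sub, Matrix.trace_sub, Matrix.trace_sub, h2, h3, ← Matrix.mul_assoc]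
  ring

/-- Reduced Rank Procrustes Rotation (Theorem 1): if `Mᵀ G = U D Vᵀ` is a thin SVD
(`Uᵀ U = I_p`, `V` orthogonal `p×p`, `D` diagonal with nonnegative entries), then
`Ĥ = U Vᵀ` is semi-orthogonal and minimizes `‖M − G Hᵀ‖_F²` over all `H` with
`Hᵀ H = I_p`. -/
theorem reduced_rank_procrustes {N n p : ℕ}
    (M : Matrix (Fin N) (Fin n) ℝ) (G : Matrix (Fin N) (Fin p) ℝ)
    (U : Matrix (Fin n) (Fin p) ℝ) (V D : Matrix (Fin p) (Fin p) ℝ)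
    (d : Fin p → ℝ)
    (hSVD : Mᵀ * G = U * D * Vᵀ)
    (hU : Uᵀ * U = 1)
    (hV₁ : Vᵀ * V = 1) (hV₂ : V * Vᵀ = 1)
    (hD : D = Matrix.diagonal d) (hd : ∀ i, 0 ≤ d i) :
    (U * Vᵀ)ᵀ * (U * Vᵀ) = 1 ∧
      ∀ H : Matrix (Fin n) (Fin p) ℝ, Hᵀ * H = 1 →
        (frobNorm (M - G * (U * Vᵀ)ᵀ)) ^ 2 ≤ (frobNorm (M - G * Hᵀ)) ^ 2 := by
  have horth : (U * Vᵀ)ᵀ * (U * Vᵀ) = 1 := by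
    calc (U * Vᵀ)ᵀ * (U * Vᵀ) = V * (Uᵀ * U) * Vᵀ := by
          simp [Matrix.transpose_mul, Matrix.mul_assoc]
      _ = 1 := by rw [hU]; simpa using hV₂
  refine ⟨horth, fun H hH => ?_⟩
  rw [expand_obj M G _ horth, expand_obj M G H hH]
  have key2 : ∀ K : Matrix (Fin n) (Fin p) ℝ,
      (Mᵀ * G * Kᵀ).trace = ∑ i, d i * (Vᵀ * Kᵀ * U) i i := by
    intro K
    rw [hSVD]
    have e : U * D * Vᵀ * Kᵀ = U * (D * (Vᵀ * Kᵀ)) := by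
      simp [Matrix.mul_assoc]
    rw [e, Matrix.trace_mul_comm, Matrix.mul_assoc, hD]
    simp only [Matrix.trace, Matrix.diag, Matrix.diagonal_mul]
  have hdiag : ∀ i, (Vᵀ * Hᵀ * U) i i ≤ 1 := by
    intro i
    set W := H * V with hWdef
    have hKV : Wᵀ * W = 1 := by
      calc Wᵀ * W = Vᵀ * (Hᵀ * H) * V := by
            simp [hWdef, Matrix.transpose_mul, Matrix.mul_assoc]
        _ = 1 := by rw [hH]; simpa using hV₁
    have ha : ∑ k, (W k i) ^ 2 = 1 := by
      have h := congrArg (fun A => A i i) hKV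
      simp only [Matrix.mul_apply, Matrix.transpose_apply, Matrix.one_apply_eq, sq] at h ⊢
      exact h
    have hb : ∑ k, (U k i) ^ 2 = 1 := by
      have h := congrArg (fun A => A i i) hU
      simp only [Matrix.mul_apply, Matrix.transpose_apply, Matrix.one_apply_eq, sq] at h ⊢
      exact h
    have hcs := Finset.sum_mul_sq_le_sq_mul_sq Finset.univ (fun k => W k i) (fun k => U k i)
    rw [ha, hb, mul_one] at hcs
    have hval : (Vᵀ * Hᵀ * U) i i = ∑ k, W k i * U k i := by
      have e : Vᵀ * Hᵀ * U = Wᵀ * U := by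
        rw [hWdef, Matrix.transpose_mul]
      rw [e]
      simp only [Matrix.mul_apply, Matrix.transpose_apply]
    rw [hval]
    nlinarith [hcs]
  have hbest : (Vᵀ * (U * Vᵀ)ᵀ * U) = 1 := by
    calc Vᵀ * (U * Vᵀ)ᵀ * U = Vᵀ * V * (Uᵀ * U) := by
          simp [Matrix.transpose_mul, Matrix.mul_assoc]
      _ = 1 := by rw [hU, hV₁]; simp
  have lhs_eq : ∑ i, d i * (Vᵀ * (U * Vᵀ)ᵀ * U) i i = ∑ i, d i := by
    rw [hbest]; simp [Matrix.one_apply]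
  rw [key2, key2, lhs_eq]
  have hsum : ∑ i, d i * (Vᵀ * Hᵀ * U) i i ≤ ∑ i, d i := by
    apply Finset.sum_le_sum
    intro i _
    exact mul_le_of_le_one_right (hd i) (hdiag i)
  linarith
end

section
/- Let X be a real N×n matrix and let μ₁ ≥ μ₂ ≥ ⋯ ≥ μ_n be the eigenvalues of the symmetric positive semidefinite matrix XᵀX listed in non-increasing order. Then for every real n×p matrix B with BᵀB = I_p, the PCA-type reconstruction error satisfies ‖X − X B Bᵀ‖_F² ≥ μ_{p+1} + μ_{p+2} + ⋯ + μ_n, i.e. the squared reconstruction error of any orthogonal projection onto a p-dimensional subspace is at least the sum of the n − p smallest eigenvalues of XᵀX. -/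
open Matrix

private lemma frob_sq {m n : Type*} [Fintype m] [Fintype n] (M : Matrix m n ℝ) :
    (frobNorm M) ^ 2 = Matrix.trace (Mᵀ * M) := by
  rw [frobNorm, Real.sq_sqrt (by positivity)]
  rw [Finset.sum_comm]
  simp [Matrix.trace, Matrix.mul_apply, Matrix.diag, sq]

private lemma trace_expand {N n p : ℕ} (X : Matrix (Fin N) (Fin n) ℝ)
    (B : Matrix (Fin n) (Fin p) ℝ) (hB : Bᵀ * B = 1) :
    Matrix.trace ((X - X * B * Bᵀ)ᵀ * (X - X * B * Bᵀ)) =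
      Matrix.trace (Xᵀ * X) - Matrix.trace (Bᵀ * (Xᵀ * X) * B) := by
  have h1 : Matrix.trace (Xᵀ * (X * B * Bᵀ)) = Matrix.trace (Bᵀ * (Xᵀ * X) * B) := by
    rw [show Xᵀ * (X * B * Bᵀ) = (Xᵀ * X * B) * Bᵀ by simp only [Matrix.mul_assoc],
      Matrix.trace_mul_comm, ← Matrix.mul_assoc]
  have h2 : Matrix.trace ((X * B * Bᵀ)ᵀ * X) = Matrix.trace (Bᵀ * (Xᵀ * X) * B) := by
    rw [show (X * B * Bᵀ)ᵀ * X = B * (Bᵀ * (Xᵀ * X)) by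
        simp only [Matrix.transpose_mul, Matrix.transpose_transpose, Matrix.mul_assoc],
      Matrix.trace_mul_comm, ← Matrix.mul_assoc]
  have h3 : Matrix.trace ((X * B * Bᵀ)ᵀ * (X * B * Bᵀ)) = Matrix.trace (Bᵀ * (Xᵀ * X) * B) := by
    rw [show (X * B * Bᵀ)ᵀ * (X * B * Bᵀ) = B * (Bᵀ * (Xᵀ * X) * B * Bᵀ) by
        simp only [Matrix.transpose_mul, Matrix.transpose_transpose, Matrix.mul_assoc],
      Matrix.trace_mul_comm,
      show Bᵀ * (Xᵀ * X) * B * Bᵀ * B = Bᵀ * (Xᵀ * X) * B * (Bᵀ * B) by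
        simp only [Matrix.mul_assoc],
      hB, Matrix.mul_one]
  rw [Matrix.transpose_sub, Matrix.sub_mul, Matrix.mul_sub, Matrix.mul_sub,
    Matrix.trace_sub, Matrix.trace_sub, Matrix.trace_sub, h1, h2, h3]
  ring

private lemma key_ineq {n p : ℕ} (hpn : p < n) (μ c : Fin n → ℝ) (hμ : Antitone μ)
    (hc0 : ∀ i, 0 ≤ c i) (hc1 : ∀ i, c i ≤ 1) (hsum : ∑ i, c i = p) :
    ∑ i, μ i * c i ≤ ∑ i ∈ Finset.univ.filter (fun i : Fin n => (i : ℕ) < p), μ i := by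
  set t := μ ⟨p, hpn⟩ with ht
  set A := Finset.univ.filter (fun i : Fin n => (i : ℕ) < p) with hA
  set B := Finset.univ.filter (fun i : Fin n => ¬ (i : ℕ) < p) with hB
  have hcard : A.card = p := by
    have : A = Finset.Iio ⟨p, hpn⟩ := by ext i; simp [hA, Fin.lt_def]
    rw [this, Fin.card_Iio]
  have hsplit : ∀ f : Fin n → ℝ, ∑ i, f i = ∑ i ∈ A, f i + ∑ i ∈ B, f i := by
    intro f; rw [hA, hB, Finset.sum_filter_add_sum_filter_not]
  have bA : ∑ i ∈ A, μ i * c i ≤ ∑ i ∈ A, (μ i + t * (c i - 1)) := by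
    apply Finset.sum_le_sum
    intro i hi
    have hip : (i : ℕ) < p := by simpa [hA] using hi
    have hmt : t ≤ μ i := hμ (by simp [Fin.le_def]; omega)
    nlinarith [hc1 i, hc0 i]
  have bB : ∑ i ∈ B, μ i * c i ≤ ∑ i ∈ B, t * c i := by
    apply Finset.sum_le_sum
    intro i hi
    have hip : ¬ (i : ℕ) < p := by simpa [hB] using hi
    have hmt : μ i ≤ t := hμ (by simp [Fin.le_def]; omega)
    nlinarith [hc0 i]
  have e1 : ∑ i ∈ A, (μ i + t * (c i - 1)) = ∑ i ∈ A, μ i + t * (∑ i ∈ A, c i) - t * p := by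
    rw [Finset.sum_add_distrib, ← Finset.mul_sum, Finset.sum_sub_distrib]
    simp [hcard]; ring
  have h1 := hsplit c
  have h2 := hsplit (fun i => μ i * c i)
  have hBt : ∑ i ∈ B, t * c i = t * ∑ i ∈ B, c i := by rw [Finset.mul_sum]
  have hsc : ∑ i ∈ A, c i + ∑ i ∈ B, c i = (p : ℝ) := by
    rw [← hsplit c]; exact hsum
  have hts : t * (∑ i ∈ A, c i) + t * (∑ i ∈ B, c i) = t * p := by
    rw [← mul_add, hsc]
  linarith

/-- Let `μ₀ ≥ μ₁ ≥ ⋯ ≥ μ_{n-1}` be the eigenvalues of `Xᵀ X` in non-increasing order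
(witnessed by an orthogonal eigendecomposition `Xᵀ X = Q diag(μ) Qᵀ` with `μ` antitone).
Then, for every `B` with `Bᵀ B = I_p`, the reconstruction error
`‖X − X B Bᵀ‖_F²` is at least the sum of the `n − p` smallest eigenvalues
`μ_p + μ_{p+1} + ⋯ + μ_{n-1}`. -/
theorem pca_reconstruction_error_lower_bound {N n p : ℕ}
    (X : Matrix (Fin N) (Fin n) ℝ)
    (μ : Fin n → ℝ) (Q : Matrix (Fin n) (Fin n) ℝ)
    (hμ : Antitone μ)
    (hQ : Qᵀ * Q = 1)
    (hEig : Xᵀ * X = Q * Matrix.diagonal μ * Qᵀ) :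
    ∀ B : Matrix (Fin n) (Fin p) ℝ, Bᵀ * B = 1 →
      (∑ i ∈ Finset.univ.filter (fun i : Fin n => p ≤ (i : ℕ)), μ i) ≤
        (frobNorm (X - X * B * Bᵀ)) ^ 2 := by
  intro B hB
  by_cases hpn : p < n
  swap
  · -- p ≥ n : the sum on the left is empty
    have : Finset.univ.filter (fun i : Fin n => p ≤ (i : ℕ)) = ∅ := by
      ext i; simp; omega
    rw [this, Finset.sum_empty]
    exact sq_nonneg _
  -- main case
  have hQQ : Q * Qᵀ = 1 := mul_eq_one_comm.mp hQ
  set C := Qᵀ * B with hC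
  have hCC : Cᵀ * C = 1 := by
    rw [hC, Matrix.transpose_mul, Matrix.transpose_transpose,
      show Bᵀ * Q * (Qᵀ * B) = Bᵀ * (Q * Qᵀ) * B by simp only [Matrix.mul_assoc],
      hQQ, Matrix.mul_one, hB]
  set c : Fin n → ℝ := fun i => ∑ j, (C i j) ^ 2 with hc
  -- trace identities
  have htrA : Matrix.trace (Xᵀ * X) = ∑ i, μ i := by
    rw [hEig, Matrix.trace_mul_comm,
      show Qᵀ * (Q * Matrix.diagonal μ) = (Qᵀ * Q) * Matrix.diagonal μ by
        simp only [Matrix.mul_assoc],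
      hQ, Matrix.one_mul, Matrix.trace_diagonal]
  have htrB : Matrix.trace (Bᵀ * (Xᵀ * X) * B) = ∑ i, μ i * c i := by
    have : Bᵀ * (Xᵀ * X) * B = Cᵀ * Matrix.diagonal μ * C := by
      rw [hEig, hC, Matrix.transpose_mul, Matrix.transpose_transpose]
      simp only [Matrix.mul_assoc]
    rw [this]
    simp only [Matrix.trace, Matrix.diag, Matrix.mul_apply, Matrix.transpose_apply,
      Matrix.diagonal_apply]
    rw [Finset.sum_comm]
    apply Finset.sum_congr rfl
    intro i _
    rw [hc, Finset.mul_sum]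
    apply Finset.sum_congr rfl
    intro j _
    rw [Finset.sum_eq_single i (by intro b _ hbi; simp [hbi]) (by simp)]
    simp [sq]
    ring
  -- properties of c
  have hc0 : ∀ i, 0 ≤ c i := fun i => Finset.sum_nonneg fun j _ => sq_nonneg _
  have hc1 : ∀ i, c i ≤ 1 := by
    intro i
    set r : Fin p → ℝ := fun j => C i j with hr
    set u : Fin n → ℝ := C.mulVec r with hu
    have hui : u i = c i := by
      simp [hu, hr, hc, Matrix.mulVec, dotProduct, sq]
    have huu : u ⬝ᵥ u = c i := by
      rw [hu, Matrix.dotProduct_mulVec, ← Matrix.mulVec_transpose,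
        Matrix.mulVec_mulVec, hCC, Matrix.one_mulVec]
      simp [dotProduct, hr, hc, sq]
    have hle : (u i) ^ 2 ≤ u ⬝ᵥ u := by
      rw [dotProduct]
      exact Finset.single_le_sum (f := fun k => u k * u k)
        (fun k _ => mul_self_nonneg _) (Finset.mem_univ i) |>.trans_eq' (by rw [sq])
    rw [hui, huu] at hle
    nlinarith [hc0 i]
  have hcsum : ∑ i, c i = (p : ℝ) := by
    have : ∑ i, c i = Matrix.trace (Cᵀ * C) := by
      simp only [Matrix.trace, Matrix.diag, Matrix.mul_apply, Matrix.transpose_apply, hc, sq]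
      rw [Finset.sum_comm]
    rw [this, hCC, Matrix.trace_one]
    simp
  -- put it together
  rw [frob_sq, trace_expand X B hB, htrA, htrB]
  have hkey := key_ineq hpn μ c hμ hc0 hc1 hcsum
  have hfs : ∑ i ∈ Finset.univ.filter (fun i : Fin n => (i : ℕ) < p), μ i
      + ∑ i ∈ Finset.univ.filter (fun i : Fin n => ¬ (i : ℕ) < p), μ i = ∑ i, μ i :=
    Finset.sum_filter_add_sum_filter_not _ _ _
  have hfeq : Finset.univ.filter (fun i : Fin n => p ≤ (i : ℕ)) =
      Finset.univ.filter (fun i : Fin n => ¬ (i : ℕ) < p) := by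
    ext i; simp
  rw [hfeq]
  linarith
end

section
/- (Optimality of PCA for the linear autoencoder, after Baldi–Hornik.) Let X be a real N×n matrix and let μ₁ ≥ μ₂ ≥ ⋯ ≥ μ_n be the eigenvalues of the symmetric positive semidefinite matrix XᵀX listed in non-increasing order. Suppose u₁, …, u_p are orthonormal eigenvectors of XᵀX with (XᵀX) uᵢ = μᵢ uᵢ for i = 1, …, p, and let U_p be the n×p matrix with columns u₁, …, u_p. Then for all real n×p matrices A and B, ‖X − X A Bᵀ‖_F² ≥ ‖X − X U_p U_pᵀ‖_F² = μ_{p+1} + ⋯ + μ_n. That is, the choice A = B = U_p attains the global minimum of the linear autoencoder objective ‖X − X A Bᵀ‖_F². -/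
/-!
For any `A, B`, the `n - p`-dimensional kernel of `Bᵀ` carries an orthonormal frame `V`, and
`(X - X A Bᵀ) V = X V`. Right multiplication by a matrix with orthonormal columns does not increase
the Frobenius norm, so `‖X - X A Bᵀ‖² ≥ ‖X V‖² = tr (Vᵀ XᵀX V)`, which is at least
`μ_p + ⋯ + μ_{n-1}` by Ky Fan's minimum principle. On the other side, Pythagoras gives
`‖X - X Up Upᵀ‖² = ‖X‖² - ‖X Up‖² = tr (XᵀX) - (μ₀ + ⋯ + μ_{p-1})`.
-/

open Matrix

theorem Finset.sum_le_sum_mul_of_threshold {ι : Type*} [Fintype ι] [DecidableEq ι] (s : Finset ι)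
    {μ t : ι → ℝ} (c : ℝ) (hs : ∀ i ∈ s, μ i ≤ c) (hsc : ∀ i ∉ s, c ≤ μ i) (ht0 : ∀ i, 0 ≤ t i)
    (ht1 : ∀ i, t i ≤ 1) (ht : ∑ i, t i = s.card) :
    ∑ i ∈ s, μ i ≤ ∑ i, μ i * t i := by
  have hin : ∑ i ∈ s, μ i * (1 - t i) ≤ ∑ i ∈ s, c * (1 - t i) :=
    Finset.sum_le_sum fun i hi => mul_le_mul_of_nonneg_right (hs i hi) (sub_nonneg.2 (ht1 i))
  have hout : ∑ i ∈ sᶜ, c * t i ≤ ∑ i ∈ sᶜ, μ i * t i :=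
    Finset.sum_le_sum fun i hi =>
      mul_le_mul_of_nonneg_right (hsc i (Finset.mem_compl.1 hi)) (ht0 i)
  rw [← Finset.sum_add_sum_compl s] at ht ⊢
  simp only [mul_sub, mul_one, Finset.sum_sub_distrib, ← Finset.mul_sum, Finset.sum_const,
    nsmul_eq_mul] at hin hout
  have hc := congrArg (c * ·) ht
  simp only [mul_add] at hc
  linarith

theorem Antitone.exists_threshold {n p : ℕ} (hp : p ≤ n) {μ : Fin n → ℝ} (hμ : Antitone μ) :
    ∃ c, (∀ i : Fin n, p ≤ (i : ℕ) → μ i ≤ c) ∧ ∀ i : Fin n, ¬ p ≤ (i : ℕ) → c ≤ μ i := by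
  rcases Nat.eq_zero_or_pos n with rfl | hn
  · exact ⟨0, finZeroElim, finZeroElim⟩
  exact ⟨μ ⟨p - 1, by omega⟩, fun i hi => hμ (Fin.mk_le_of_le_val (by omega)),
    fun i hi => hμ (Fin.le_def.2 (by simp only; omega))⟩

theorem Fin.card_filter_le_val {n p : ℕ} :
    (Finset.univ.filter fun i : Fin n => p ≤ (i : ℕ)).card = n - p := by
  have := Finset.card_filter_add_card_filter_not (s := (Finset.univ : Finset (Fin n)))
    (fun i : Fin n => (i : ℕ) < p)
  simp only [not_lt, Fin.card_filter_val_lt, Finset.card_univ, Fintype.card_fin] at this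
  omega

theorem Fin.sum_univ_eq_sum_castLE_add_sum_filter {n p : ℕ} (hp : p ≤ n) (f : Fin n → ℝ) :
    ∑ i, f i = ∑ i : Fin p, f (Fin.castLE hp i) +
      ∑ i ∈ Finset.univ.filter fun i : Fin n => p ≤ (i : ℕ), f i := by
  rw [← Finset.sum_filter_not_add_sum_filter _ (fun i : Fin n => p ≤ (i : ℕ))]
  congr 1
  refine Eq.trans ?_ (Finset.sum_map Finset.univ (Fin.castLEEmb hp) f)
  congr 1
  ext i
  simp [← Set.mem_range (f := Fin.castLE hp)]

theorem Orthonormal.transpose_mul_self_eq_one {ι n : Type*} [Fintype n] [DecidableEq ι]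
    {v : ι → EuclideanSpace ℝ n} (hv : Orthonormal ℝ v) :
    (Matrix.of fun j k => v k j)ᵀ * (Matrix.of fun j k => v k j) = 1 := by
  ext k l
  rw [Matrix.one_apply, ← orthonormal_iff_ite.1 hv k l, PiLp.inner_apply]
  simp [Matrix.mul_apply, mul_comm]

namespace Matrix

theorem exists_orthonormal_columns_mul_eq_zero {n p : ℕ} (B : Matrix (Fin p) (Fin n) ℝ) :
    ∃ V : Matrix (Fin n) (Fin (n - p)) ℝ, Vᵀ * V = 1 ∧ B * V = 0 := by
  let f := toEuclideanLin B
  have hker : n - p ≤ Module.finrank ℝ (LinearMap.ker f) := by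
    have hrange : Module.finrank ℝ (LinearMap.range f) ≤ p := by
      simpa using Submodule.finrank_le (LinearMap.range f)
    have := LinearMap.finrank_range_add_finrank_ker f
    simp only [finrank_euclideanSpace, Fintype.card_fin] at this
    omega
  let b := stdOrthonormalBasis ℝ (LinearMap.ker f)
  let v : Fin (n - p) → EuclideanSpace ℝ (Fin n) := fun k => b (Fin.castLE hker k)
  have hv : Orthonormal ℝ v :=
    (b.orthonormal.comp _ (Fin.castLE_injective hker)).comp_linearIsometry
      (LinearMap.ker f).subtypeₗᵢ
  refine ⟨_, hv.transpose_mul_self_eq_one, ?_⟩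
  ext i k
  have hvk : f (v k) = 0 := (b (Fin.castLE hker k)).2
  simpa [f, mul_apply, mulVec, dotProduct] using congrFun (congrArg WithLp.ofLp hvk) i

theorem mul_eq_mul_diagonal_of_mulVec_eq_smul {m k R : Type*} [Fintype m] [Fintype k] [DecidableEq k]
    [CommSemiring R] {G : Matrix m m R} {U : Matrix m k R} {d : k → R}
    (h : ∀ i, G *ᵥ (fun j => U j i) = d i • fun j => U j i) : G * U = U * diagonal d := by
  ext j i
  rw [mul_diagonal, mul_comm (U j i)]
  simpa [mulVec, dotProduct, mul_apply] using congrFun (h i) j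

variable {l m k : Type*} [Fintype l] [Fintype m] [Fintype k]

theorem frobNorm_sq_eq_trace (M : Matrix l m ℝ) : frobNorm M ^ 2 = trace (Mᵀ * M) := by
  rw [frobNorm, Real.sq_sqrt (by positivity)]
  simp only [trace, diag, mul_apply, transpose_apply, sq]
  exact Finset.sum_comm

theorem frobNorm_mul_sq (M : Matrix l m ℝ) (W : Matrix m k ℝ) :
    frobNorm (M * W) ^ 2 = trace (Wᵀ * (Mᵀ * M) * W) := by
  simp only [frobNorm_sq_eq_trace, transpose_mul, Matrix.mul_assoc]

theorem diag_transpose_mul_self_nonneg (M : Matrix l m ℝ) (i : m) : 0 ≤ (Mᵀ * M) i i := by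
  simpa using (posSemidef_conjTranspose_mul_self M).diag_nonneg (i := i)

theorem trace_transpose_mul_diagonal_mul [DecidableEq m] (μ : m → ℝ) (W : Matrix m k ℝ) :
    trace (Wᵀ * diagonal μ * W) = ∑ i, μ i * (W * Wᵀ) i i := by
  rw [trace_mul_cycle, trace_mul_comm]
  simp [trace, diagonal_mul]

section OrthonormalColumns

variable [DecidableEq k] {W : Matrix m k ℝ}

theorem isIdempotentElem_mul_transpose (hW : Wᵀ * W = 1) : IsIdempotentElem (W * Wᵀ) := by
  rw [IsIdempotentElem, Matrix.mul_assoc, ← Matrix.mul_assoc Wᵀ, hW, Matrix.one_mul]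

variable [DecidableEq m]

theorem frobNorm_sub_mul_mul_transpose_sq (hW : Wᵀ * W = 1) (M : Matrix l m ℝ) :
    frobNorm (M - M * W * Wᵀ) ^ 2 = frobNorm M ^ 2 - frobNorm (M * W) ^ 2 := by
  have hsymm : (1 - W * Wᵀ)ᵀ = 1 - W * Wᵀ := by simp [transpose_mul]
  rw [show M - M * W * Wᵀ = M * (1 - W * Wᵀ) by simp [Matrix.mul_sub, Matrix.mul_assoc],
    frobNorm_mul_sq, frobNorm_mul_sq, frobNorm_sq_eq_trace, hsymm, trace_mul_cycle,
    (isIdempotentElem_mul_transpose hW).one_sub.eq, Matrix.sub_mul, Matrix.one_mul, trace_sub,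
    Matrix.mul_assoc, trace_mul_comm W]

theorem frobNorm_mul_sq_le (hW : Wᵀ * W = 1) (M : Matrix l m ℝ) :
    frobNorm (M * W) ^ 2 ≤ frobNorm M ^ 2 := by
  have := frobNorm_sub_mul_mul_transpose_sq hW M
  nlinarith [sq_nonneg (frobNorm (M - M * W * Wᵀ))]

theorem mul_transpose_diag_le_one (hW : Wᵀ * W = 1) (i : m) : (W * Wᵀ) i i ≤ 1 := by
  have hsymm : (1 - W * Wᵀ)ᵀ = 1 - W * Wᵀ := by simp [transpose_mul]
  have h := diag_transpose_mul_self_nonneg (1 - W * Wᵀ) i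
  rw [hsymm, (isIdempotentElem_mul_transpose hW).one_sub.eq] at h
  simpa using h

end OrthonormalColumns

/-- Ky Fan's minimum principle: with `t i := (W Wᵀ) i i ∈ [0, 1]` summing to `n - p`,
`tr (Wᵀ diag μ W) = ∑ μ i * t i`, and such a weighted sum is smallest when the weight sits on
the `n - p` smallest entries of `μ`. -/
theorem sum_filter_le_trace_transpose_mul_mul {n p : ℕ} (hp : p ≤ n) {μ : Fin n → ℝ}
    (hμ : Antitone μ) {Q : Matrix (Fin n) (Fin n) ℝ} (hQ : Qᵀ * Q = 1)
    {V : Matrix (Fin n) (Fin (n - p)) ℝ} (hV : Vᵀ * V = 1) :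
    ∑ i ∈ Finset.univ.filter (fun i : Fin n => p ≤ (i : ℕ)), μ i ≤
      trace (Vᵀ * (Q * diagonal μ * Qᵀ) * V) := by
  set W := Qᵀ * V
  have hW : Wᵀ * W = 1 := by
    rw [transpose_mul, transpose_transpose, Matrix.mul_assoc, ← Matrix.mul_assoc Q,
      mul_eq_one_comm.1 hQ, Matrix.one_mul, hV]
  have htrace : trace (Vᵀ * (Q * diagonal μ * Qᵀ) * V) = trace (Wᵀ * diagonal μ * W) := by
    simp only [W, transpose_mul, transpose_transpose, Matrix.mul_assoc]
  obtain ⟨c, hsmall, hlarge⟩ := hμ.exists_threshold hp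
  rw [htrace, trace_transpose_mul_diagonal_mul]
  refine Finset.sum_le_sum_mul_of_threshold _ c (fun i hi => hsmall i (Finset.mem_filter.1 hi).2)
    (fun i hi => hlarge i (by simpa using hi))
    (fun i => by simpa using diag_transpose_mul_self_nonneg Wᵀ i) (mul_transpose_diag_le_one hW) ?_
  rw [Fin.card_filter_le_val, show ∑ i, (W * Wᵀ) i i = trace (W * Wᵀ) from rfl, trace_mul_comm, hW, trace_one, Fintype.card_fin]

end Matrix

/-- Optimality of PCA for the linear autoencoder (after Baldi–Hornik).
Let `μ₀ ≥ μ₁ ≥ ⋯ ≥ μ_{n-1}` be the eigenvalues of `Xᵀ X` in non-increasing order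
(witnessed by an orthogonal eigendecomposition `Xᵀ X = Q diag(μ) Qᵀ` with `μ` antitone),
and let `Up` have orthonormal columns that are eigenvectors of `Xᵀ X` for the `p`
largest eigenvalues `μ₀, …, μ_{p-1}`. Then for all real `n×p` matrices `A` and `B`,
`‖X − X A Bᵀ‖_F² ≥ ‖X − X Up Upᵀ‖_F² = μ_p + ⋯ + μ_{n-1}`. -/
theorem linear_autoencoder_pca_optimal {N n p : ℕ} (hp : p ≤ n)
    (X : Matrix (Fin N) (Fin n) ℝ)
    (μ : Fin n → ℝ) (Q : Matrix (Fin n) (Fin n) ℝ)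
    (hμ : Antitone μ)
    (hQ : Qᵀ * Q = 1)
    (hEigQ : Xᵀ * X = Q * Matrix.diagonal μ * Qᵀ)
    (Up : Matrix (Fin n) (Fin p) ℝ)
    (hUp : Upᵀ * Up = 1)
    (hEigU : ∀ i : Fin p,
      (Xᵀ * X) *ᵥ (fun j => Up j i) = μ (Fin.castLE hp i) • (fun j => Up j i)) :
    (∀ A B : Matrix (Fin n) (Fin p) ℝ,
        (frobNorm (X - X * Up * Upᵀ)) ^ 2 ≤ (frobNorm (X - X * A * Bᵀ)) ^ 2) ∧
      (frobNorm (X - X * Up * Upᵀ)) ^ 2 =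
        ∑ i ∈ Finset.univ.filter (fun i : Fin n => p ≤ (i : ℕ)), μ i := by
  have hX : frobNorm X ^ 2 = ∑ i, μ i := by
    rw [frobNorm_sq_eq_trace, hEigQ, trace_mul_cycle, hQ, Matrix.one_mul, trace_diagonal]
  have hXUp : frobNorm (X * Up) ^ 2 = ∑ i : Fin p, μ (Fin.castLE hp i) := by
    rw [frobNorm_mul_sq, Matrix.mul_assoc, mul_eq_mul_diagonal_of_mulVec_eq_smul hEigU,
      ← Matrix.mul_assoc, hUp, Matrix.one_mul, trace_diagonal]
  have hopt : frobNorm (X - X * Up * Upᵀ) ^ 2 =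
      ∑ i ∈ Finset.univ.filter (fun i : Fin n => p ≤ (i : ℕ)), μ i := by
    rw [frobNorm_sub_mul_mul_transpose_sq hUp, hX, hXUp,
      Fin.sum_univ_eq_sum_castLE_add_sum_filter hp]
    ring
  refine ⟨fun A B => ?_, hopt⟩
  obtain ⟨V, hV, hBV⟩ := exists_orthonormal_columns_mul_eq_zero Bᵀ
  have hZV : (X - X * A * Bᵀ) * V = X * V := by
    rw [Matrix.sub_mul, Matrix.mul_assoc (X * A), hBV, Matrix.mul_zero, sub_zero]
  calc frobNorm (X - X * Up * Upᵀ) ^ 2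
      = ∑ i ∈ Finset.univ.filter (fun i : Fin n => p ≤ (i : ℕ)), μ i := hopt
    _ ≤ frobNorm (X * V) ^ 2 := by
      rw [frobNorm_mul_sq, hEigQ]
      exact sum_filter_le_trace_transpose_mul_mul hp hμ hQ hV
    _ = frobNorm ((X - X * A * Bᵀ) * V) ^ 2 := by rw [hZV]
    _ ≤ frobNorm (X - X * A * Bᵀ) ^ 2 := frobNorm_mul_sq_le hV _
end
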